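/- arXiv:2501.02885 — 7 statements merged into one kernel-verified Lean document; each statement's English description precedes it below -/
import Mathlib

section
/- Let Ω be a finite type with decidable equality and f : Finset Ω → ℝ a monotone, submodular set function with f(∅) = 0. Fix an integer k ≥ 1 and let S₀, S₁, …, S_k be a greedy sequence, i.e. S₀ = ∅ and for each t < k there is an element x_t ∉ S_t such that S_{t+1} = S_t ∪ {x_t} and f(S_t ∪ {x_t}) − f(S_t) ≥ f(S_t ∪ {y}) − f(S_t) for every y ∉ S_t. Then for every finset S* ⊆ Ω with |S*| = k, f(S_k) ≥ (1 − 1/e) · f(S*), where e is Euler's number. -/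
/-- Greedy algorithm for monotone submodular maximization achieves a
`(1 - 1/e)`-approximation. -/
theorem greedy_one_sub_inv_exp_approx
    {Ω : Type*} [Fintype Ω] [DecidableEq Ω]
    (f : Finset Ω → ℝ)
    (hmono : ∀ X Y : Finset Ω, X ⊆ Y → f X ≤ f Y)
    (hsub : ∀ X Y : Finset Ω, f X + f Y ≥ f (X ∪ Y) + f (X ∩ Y))
    (hempty : f ∅ = 0)
    (k : ℕ) (hk : 1 ≤ k)
    (S : ℕ → Finset Ω)
    (hS0 : S 0 = ∅)
    (hgreedy : ∀ t < k, ∃ x ∉ S t, S (t + 1) = insert x (S t) ∧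
      ∀ y ∉ S t, f (insert y (S t)) - f (S t) ≤ f (insert x (S t)) - f (S t))
    (Sstar : Finset Ω) (hcard : Sstar.card = k) :
    f (S k) ≥ (1 - 1 / Real.exp 1) * f Sstar := by
  have hk0 : (0:ℝ) < (k:ℝ) := by exact_mod_cast hk
  -- marginal sum bound
  have hmarg : ∀ (T A : Finset Ω), f (A ∪ T) ≤ f A + ∑ y ∈ T, (f (insert y A) - f A) := by
    intro T
    induction T using Finset.induction_on with
    | empty => intro A; simp
    | @insert y T hy ih =>
      intro A
      have hu : (A ∪ T) ∪ insert y A = insert y (A ∪ T) := by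
        ext a; simp; tauto
      have hxi : A ⊆ (A ∪ T) ∩ insert y A := by
        intro a ha; simp [ha]
      have hsub' := hsub (A ∪ T) (insert y A)
      rw [hu] at hsub'
      have hm := hmono A _ hxi
      have h1 : A ∪ insert y T = insert y (A ∪ T) := by
        ext a; simp

      rw [h1, Finset.sum_insert hy]
      have := ih A
      linarith
  have hfstar : 0 ≤ f Sstar := by
    have := hmono ∅ Sstar (Finset.empty_subset _)
    rw [hempty] at this
    linarith
  -- key induction
  have key : ∀ t, t ≤ k → f Sstar - f (S t) ≤ (1 - 1/(k:ℝ))^t * f Sstar := by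
    intro t
    induction t with
    | zero => intro _; simp [hS0, hempty]
    | succ t ih =>
      intro ht
      have htk : t < k := ht
      have ihv := ih (le_of_lt htk)
      obtain ⟨x, hx, hSx, hbest⟩ := hgreedy t htk
      set δ := f (S (t+1)) - f (S t) with hδdef
      have hδ0 : 0 ≤ δ := by
        have := hmono (S t) (S (t+1)) (hSx ▸ Finset.subset_insert _ _)
        linarith
      have hterm : ∀ y ∈ Sstar, f (insert y (S t)) - f (S t) ≤ δ := by
        intro y _
        by_cases hy : y ∈ S t
        · rw [Finset.insert_eq_self.mpr hy]; linarith
        · have := hbest y hy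
          rw [hδdef, hSx]
          exact this
      have hsum : f Sstar ≤ f (S t) + (k:ℝ) * δ := by
        have h1 : f Sstar ≤ f (S t ∪ Sstar) := hmono _ _ Finset.subset_union_right
        have h2 := hmarg Sstar (S t)
        have h3 : ∑ y ∈ Sstar, (f (insert y (S t)) - f (S t)) ≤ ∑ _y ∈ Sstar, δ :=
          Finset.sum_le_sum hterm
        rw [Finset.sum_const, hcard, nsmul_eq_mul] at h3
        linarith
      -- f Sstar - f (S t) ≤ k * δ
      have hgap : f Sstar - f (S t) ≤ (k:ℝ) * δ := by linarith
      have hstep : f Sstar - f (S (t+1)) ≤ (1 - 1/(k:ℝ)) * (f Sstar - f (S t)) := by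
        have hdiv : (f Sstar - f (S t)) / (k:ℝ) ≤ δ := (div_le_iff₀ hk0).mpr (by linarith)
        have expand : (1 - 1/(k:ℝ)) * (f Sstar - f (S t))
            = (f Sstar - f (S t)) - (f Sstar - f (S t)) / (k:ℝ) := by
          field_simp
        linarith
      have hpos : (0:ℝ) ≤ 1 - 1/(k:ℝ) := by
        have : 1/(k:ℝ) ≤ 1 := by
          rw [div_le_one hk0]; exact_mod_cast hk
        linarith
      calc f Sstar - f (S (t+1)) ≤ (1 - 1/(k:ℝ)) * (f Sstar - f (S t)) := hstep
        _ ≤ (1 - 1/(k:ℝ)) * ((1 - 1/(k:ℝ))^t * f Sstar) :=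
            mul_le_mul_of_nonneg_left ihv hpos
        _ = (1 - 1/(k:ℝ))^(t+1) * f Sstar := by ring
  have hfinal := key k le_rfl
  have hpow : (1 - 1/(k:ℝ))^k ≤ 1 / Real.exp 1 := by
    have h1 : (1 - 1/(k:ℝ)) ≤ Real.exp (-(1/(k:ℝ))) := by
      have := Real.add_one_le_exp (-(1/(k:ℝ)))
      linarith
    have hpos : (0:ℝ) ≤ 1 - 1/(k:ℝ) := by
      have : 1/(k:ℝ) ≤ 1 := by rw [div_le_one hk0]; exact_mod_cast hk
      linarith
    calc (1 - 1/(k:ℝ))^k ≤ (Real.exp (-(1/(k:ℝ))))^k := pow_le_pow_left₀ hpos h1 k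
      _ = Real.exp ((k:ℝ) * (-(1/(k:ℝ)))) := (Real.exp_nat_mul _ k).symm
      _ = Real.exp (-1) := by
          congr 1
          field_simp
      _ = 1 / Real.exp 1 := by rw [Real.exp_neg, one_div]
  have : (1 - 1/(k:ℝ))^k * f Sstar ≤ (1 / Real.exp 1) * f Sstar :=
    mul_le_mul_of_nonneg_right hpow hfstar
  linarith
end

section
/- Let Ω be a finite type with decidable equality and f : Finset Ω → ℝ a monotone, submodular set function with f(∅) = 0. Fix an integer k ≥ 1 and let S₀, S₁, …, S_k be a greedy sequence, i.e. S₀ = ∅ and for each t < k there is an element x_t ∉ S_t such that S_{t+1} = S_t ∪ {x_t} and f(S_t ∪ {x_t}) − f(S_t) ≥ f(S_t ∪ {y}) − f(S_t) for every y ∉ S_t. Then for every finset S* ⊆ Ω with |S*| = k, f(S_k) ≥ (1 − (1 − 1/k)^k) · f(S*). -/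
theorem marginal_sum_aux
    {Ω : Type*} [DecidableEq Ω]
    (f : Finset Ω → ℝ)
    (hmono : ∀ X Y : Finset Ω, X ⊆ Y → f X ≤ f Y)
    (hsub : ∀ X Y : Finset Ω, f X + f Y ≥ f (X ∪ Y) + f (X ∩ Y))
    (A B : Finset Ω) :
    f (A ∪ B) - f B ≤ ∑ x ∈ A \ B, (f (insert x B) - f B) := by
  classical
  induction A using Finset.induction_on with
  | empty => simp
  | @insert a A' ha IH =>
    by_cases hB : a ∈ B
    · have h1 : insert a A' ∪ B = A' ∪ B := by
        rw [Finset.insert_union, Finset.insert_eq_self.mpr (Finset.mem_union_right _ hB)]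
      have h2 : insert a A' \ B = A' \ B := by
        ext y
        simp only [Finset.mem_sdiff, Finset.mem_insert]
        constructor
        · rintro ⟨rfl | h, hy⟩
          · exact absurd hB hy
          · exact ⟨h, hy⟩
        · rintro ⟨h, hy⟩; exact ⟨Or.inr h, hy⟩
      rw [h1, h2]; exact IH
    · have hnot : a ∉ A' ∪ B := by simp [ha, hB]
      have hU : insert a A' ∪ B = insert a (A' ∪ B) := Finset.insert_union a A' B
      have hI : insert a B ∩ (A' ∪ B) = B := by
        ext y
        simp only [Finset.mem_inter, Finset.mem_insert, Finset.mem_union]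
        constructor
        · rintro ⟨rfl | hy, hy2⟩
          · exact absurd (Finset.mem_union.mpr hy2) hnot
          · exact hy
        · intro hy; exact ⟨Or.inr hy, Or.inr hy⟩
      have hkey : f (insert a (A' ∪ B)) - f (A' ∪ B) ≤ f (insert a B) - f B := by
        have := hsub (insert a B) (A' ∪ B)
        have hUn : insert a B ∪ (A' ∪ B) = insert a (A' ∪ B) := by
          rw [Finset.insert_union, Finset.union_comm A' B, ← Finset.union_assoc,
            Finset.union_self]
        rw [hUn, hI] at this
        linarith
      have hsd : insert a A' \ B = insert a (A' \ B) :=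
        Finset.insert_sdiff_of_notMem _ hB
      rw [hU, hsd, Finset.sum_insert (by simp [ha])]
      have : f (insert a (A' ∪ B)) - f B
          = (f (insert a (A' ∪ B)) - f (A' ∪ B)) + (f (A' ∪ B) - f B) := by ring
      linarith

/-- Greedy algorithm for monotone submodular maximization achieves a
`(1 - (1 - 1/k)^k)`-approximation. -/
theorem greedy_one_sub_pow_approx
    {Ω : Type*} [Fintype Ω] [DecidableEq Ω]
    (f : Finset Ω → ℝ)
    (hmono : ∀ X Y : Finset Ω, X ⊆ Y → f X ≤ f Y)
    (hsub : ∀ X Y : Finset Ω, f X + f Y ≥ f (X ∪ Y) + f (X ∩ Y))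
    (hempty : f ∅ = 0)
    (k : ℕ) (hk : 1 ≤ k)
    (S : ℕ → Finset Ω)
    (hS0 : S 0 = ∅)
    (hgreedy : ∀ t < k, ∃ x ∉ S t, S (t + 1) = insert x (S t) ∧
      ∀ y ∉ S t, f (insert y (S t)) - f (S t) ≤ f (insert x (S t)) - f (S t))
    (Sstar : Finset Ω) (hcard : Sstar.card = k) :
    f (S k) ≥ (1 - (1 - 1 / (k : ℝ)) ^ k) * f Sstar := by
  have hkpos : (0 : ℝ) < k := by exact_mod_cast hk
  have hr0 : (0 : ℝ) ≤ 1 - 1 / k := by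
    rw [sub_nonneg, div_le_one hkpos]; exact_mod_cast hk
  have hfst : 0 ≤ f Sstar := by rw [← hempty]; exact hmono _ _ (Finset.empty_subset _)
  -- per-step bound
  have hstep : ∀ t < k, f Sstar - f (S t) ≤ k * (f (S (t+1)) - f (S t)) := by
    intro t ht
    obtain ⟨x, hx, hSt1, hgain⟩ := hgreedy t ht
    set δ := f (S (t+1)) - f (S t) with hδ
    have hδ0 : 0 ≤ δ := by
      rw [hδ, hSt1, sub_nonneg]; exact hmono _ _ (Finset.subset_insert _ _)
    have hsum := marginal_sum_aux f hmono hsub Sstar (S t)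
    have hbound : ∑ y ∈ Sstar \ S t, (f (insert y (S t)) - f (S t))
        ≤ (Sstar \ S t).card * δ := by
      rw [← nsmul_eq_mul, ← Finset.sum_const]
      apply Finset.sum_le_sum
      intro y hy
      rw [hδ, hSt1]
      exact hgain y (Finset.mem_sdiff.mp hy).2
    have hcard' : ((Sstar \ S t).card : ℝ) ≤ k := by
      have : (Sstar \ S t).card ≤ k := hcard ▸ Finset.card_le_card (Finset.sdiff_subset)
      exact_mod_cast this
    have h1 : f Sstar ≤ f (Sstar ∪ S t) := hmono _ _ Finset.subset_union_left
    have h2 : ((Sstar \ S t).card : ℝ) * δ ≤ k * δ := by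
      exact mul_le_mul_of_nonneg_right hcard' hδ0
    linarith
  -- main induction
  have hmain : ∀ t ≤ k, f Sstar - f (S t) ≤ (1 - 1 / (k : ℝ)) ^ t * f Sstar := by
    intro t
    induction t with
    | zero => intro _; simp [hS0, hempty]
    | succ t IH =>
      intro ht
      have ht' : t < k := ht
      have IH' := IH (le_of_lt ht')
      have hst := hstep t ht'
      have : f Sstar - f (S (t+1)) ≤ (1 - 1/(k:ℝ)) * (f Sstar - f (S t)) := by
        have : (1 - 1/(k:ℝ)) * (f Sstar - f (S t))
            = (f Sstar - f (S t)) - (1/k) * (f Sstar - f (S t)) := by ring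
        rw [this]
        have := (div_le_iff₀ hkpos).mpr (by linarith [hstep t ht'] :
          f Sstar - f (S t) ≤ (f (S (t+1)) - f (S t)) * k)
        have h3 : (1/(k:ℝ)) * (f Sstar - f (S t)) ≤ f (S (t+1)) - f (S t) := by
          rw [one_div, inv_mul_eq_div]; exact this
        linarith
      calc f Sstar - f (S (t+1)) ≤ (1 - 1/(k:ℝ)) * (f Sstar - f (S t)) := this
        _ ≤ (1 - 1/(k:ℝ)) * ((1 - 1/(k:ℝ))^t * f Sstar) :=
            mul_le_mul_of_nonneg_left IH' hr0
        _ = (1 - 1/(k:ℝ))^(t+1) * f Sstar := by ring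
  have := hmain k le_rfl
  linarith
end

section
/- Let Ω be a finite type with decidable equality and f : Finset Ω → ℝ a monotone, submodular set function with f(∅) = 0. Fix an integer k ≥ 1 and let S₀, S₁, …, S_k be a greedy sequence, i.e. S₀ = ∅ and for each t < k there is an element x_t ∉ S_t such that S_{t+1} = S_t ∪ {x_t} and f(S_t ∪ {x_t}) − f(S_t) ≥ f(S_t ∪ {y}) − f(S_t) for every y ∉ S_t. Then for every finset S* ⊆ Ω with |S*| = k and every t ≤ k, f(S*) − f(S_t) ≤ (1 − 1/k)^t · f(S*). -/
lemma submod_sum_bound {Ω : Type*} [DecidableEq Ω]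
    (f : Finset Ω → ℝ)
    (hmono : ∀ X Y : Finset Ω, X ⊆ Y → f X ≤ f Y)
    (hsub : ∀ X Y : Finset Ω, f X + f Y ≥ f (X ∪ Y) + f (X ∩ Y))
    (T : Finset Ω) (A : Finset Ω) :
    f (T ∪ A) - f T ≤ ∑ y ∈ A, (f (insert y T) - f T) := by
  induction A using Finset.induction_on with
  | empty => simp
  | @insert a A ha ih =>
    rw [Finset.sum_insert ha]
    have h1 : f (T ∪ insert a A) - f (T ∪ A) ≤ f (insert a T) - f T := by
      have h := hsub (insert a T) (T ∪ A)
      have hmon : f T ≤ f (insert a T ∩ (T ∪ A)) := by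
        apply hmono
        intro x hx
        simp [Finset.mem_inter, Finset.mem_insert, Finset.mem_union, hx]
      have hu : insert a T ∪ (T ∪ A) = T ∪ insert a A := by
        ext x; simp [Finset.mem_insert, Finset.mem_union]
      rw [hu] at h
      linarith
    have : f (T ∪ insert a A) - f T =
        (f (T ∪ insert a A) - f (T ∪ A)) + (f (T ∪ A) - f T) := by ring
    linarith

/-- Along a greedy sequence for monotone submodular maximization, the residual gap
to the optimum shrinks geometrically: `f(S*) - f(S_t) ≤ (1 - 1/k)^t · f(S*)`. -/
theorem greedy_residual_gap_geometric
    {Ω : Type*} [Fintype Ω] [DecidableEq Ω]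
    (f : Finset Ω → ℝ)
    (hmono : ∀ X Y : Finset Ω, X ⊆ Y → f X ≤ f Y)
    (hsub : ∀ X Y : Finset Ω, f X + f Y ≥ f (X ∪ Y) + f (X ∩ Y))
    (hempty : f ∅ = 0)
    (k : ℕ) (hk : 1 ≤ k)
    (S : ℕ → Finset Ω)
    (hS0 : S 0 = ∅)
    (hgreedy : ∀ t < k, ∃ x ∉ S t, S (t + 1) = insert x (S t) ∧
      ∀ y ∉ S t, f (insert y (S t)) - f (S t) ≤ f (insert x (S t)) - f (S t))
    (Sstar : Finset Ω) (hcard : Sstar.card = k) :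
    ∀ t ≤ k, f Sstar - f (S t) ≤ (1 - 1 / (k : ℝ)) ^ t * f Sstar := by
  have hkR : (0 : ℝ) < k := by exact_mod_cast hk
  have hfac : (0 : ℝ) ≤ 1 - 1 / (k : ℝ) := by
    rw [sub_nonneg, div_le_one hkR]
    exact_mod_cast hk
  intro t
  induction t with
  | zero => intro _; simp [hS0, hempty]
  | succ t ih =>
    intro ht
    have ht' : t < k := ht
    have iht := ih (le_of_lt ht')
    obtain ⟨x, hx, hSt1, hbest⟩ := hgreedy t ht'
    -- gain is nonneg
    set g := f (insert x (S t)) - f (S t) with hg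
    have hg0 : 0 ≤ g := by
      have := hmono (S t) (insert x (S t)) (Finset.subset_insert _ _)
      simpa [hg] using sub_nonneg.mpr this
    -- marginal of each y bounded by g
    have hmarg : ∀ y ∈ Sstar \ (S t), f (insert y (S t)) - f (S t) ≤ g := by
      intro y hy
      by_cases hyS : y ∈ S t
      · simp [Finset.insert_eq_self.mpr hyS]; exact hg0
      · exact hbest y hyS
    have hsum : f (S t ∪ (Sstar \ S t)) - f (S t) ≤ (k : ℝ) * g := by
      calc f (S t ∪ (Sstar \ S t)) - f (S t)
          ≤ ∑ y ∈ Sstar \ S t, (f (insert y (S t)) - f (S t)) :=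
            submod_sum_bound f hmono hsub _ _
        _ ≤ ∑ _y ∈ Sstar \ S t, g := Finset.sum_le_sum hmarg
        _ = ((Sstar \ S t).card : ℝ) * g := by
            rw [Finset.sum_const, nsmul_eq_mul]
        _ ≤ (k : ℝ) * g := by
            apply mul_le_mul_of_nonneg_right _ hg0
            have : (Sstar \ S t).card ≤ k := by
              rw [← hcard]; exact Finset.card_le_card (Finset.sdiff_subset)
            exact_mod_cast this
    have hstar : f Sstar ≤ f (S t ∪ (Sstar \ S t)) := by
      apply hmono
      intro y hy
      simp [Finset.mem_union, Finset.mem_sdiff, hy]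
    -- f Sstar - f (S t) ≤ k * g
    have hkey : f Sstar - f (S t) ≤ (k : ℝ) * g := by linarith
    have hstep : f Sstar - f (S (t + 1)) ≤ (1 - 1 / (k : ℝ)) * (f Sstar - f (S t)) := by
      rw [hSt1]
      have h1 : (1 - 1 / (k : ℝ)) * (f Sstar - f (S t)) =
          (f Sstar - f (S t)) - (f Sstar - f (S t)) / k := by ring
      rw [h1]
      have h2 : (f Sstar - f (S t)) / k ≤ g := by
        rw [div_le_iff₀ hkR]
        linarith [hkey]
      simp only [hg] at h2 ⊢
      linarith
    calc f Sstar - f (S (t + 1)) ≤ (1 - 1 / (k : ℝ)) * (f Sstar - f (S t)) := hstep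
      _ ≤ (1 - 1 / (k : ℝ)) * ((1 - 1 / (k : ℝ)) ^ t * f Sstar) :=
          mul_le_mul_of_nonneg_left iht hfac
      _ = (1 - 1 / (k : ℝ)) ^ (t + 1) * f Sstar := by ring
end

section
/- For a set function f : Finset Ω → ℝ on a type Ω with decidable equality, the following two conditions are equivalent: (1) for all finsets X ⊆ Y and every x ∉ Y, f(X ∪ {x}) − f(X) ≥ f(Y ∪ {x}) − f(Y); (2) for all finsets X, Y, f(X) + f(Y) ≥ f(X ∪ Y) + f(X ∩ Y). -/
/-- Equivalence of the diminishing-returns characterization and the lattice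
characterization of submodularity. -/
theorem submodular_iff_diminishing_returns
    {Ω : Type*} [DecidableEq Ω] (f : Finset Ω → ℝ) :
    (∀ X Y : Finset Ω, X ⊆ Y → ∀ x ∉ Y,
        f (insert x Y) - f Y ≤ f (insert x X) - f X) ↔
    (∀ X Y : Finset Ω, f X + f Y ≥ f (X ∪ Y) + f (X ∩ Y)) := by
  constructor
  · intro h
    have key : ∀ n : ℕ, ∀ X Y : Finset Ω, (Y \ X).card = n →
        f (X ∪ Y) + f (X ∩ Y) ≤ f X + f Y := by
      intro n
      induction n with
      | zero =>
        intro X Y hc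
        have hYX : Y ⊆ X := by
          rw [Finset.card_eq_zero, Finset.sdiff_eq_empty_iff_subset] at hc
          exact hc
        rw [Finset.union_eq_left.mpr hYX, Finset.inter_eq_right.mpr hYX]
      | succ n ih =>
        intro X Y hc
        have hne : (Y \ X).Nonempty := by rw [← Finset.card_pos, hc]; omega
        obtain ⟨y, hy⟩ := hne
        rw [Finset.mem_sdiff] at hy
        obtain ⟨hyY, hyX⟩ := hy
        set Y' := Y.erase y with hY'
        have hY'c : (Y' \ X).card = n := by
          have heq : Y' \ X = (Y \ X).erase y := by
            ext a
            simp only [hY', Finset.mem_sdiff, Finset.mem_erase]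
            tauto
          rw [heq, Finset.card_erase_of_mem (by simp [hyY, hyX]), hc]
          rfl
        have hYins : insert y Y' = Y := Finset.insert_erase hyY
        have hyXY' : y ∉ X ∪ Y' := by simp [hY', hyX]
        have hdr := h Y' (X ∪ Y') Finset.subset_union_right y hyXY'
        have hXY : X ∪ Y = insert y (X ∪ Y') := by
          rw [← hYins, Finset.union_insert]
        have hXint : X ∩ Y' = X ∩ Y := by
          ext a
          simp only [hY', Finset.mem_inter, Finset.mem_erase]
          constructor
          · tauto
          · rintro ⟨ha, hb⟩
            exact ⟨ha, fun he => hyX (he ▸ ha), hb⟩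
        have ihY := ih X Y' hY'c
        rw [hXY, ← hXint, ← hYins]
        linarith
    intro X Y
    exact key _ X Y rfl
  · intro h X Y hXY x hx
    have hsub := h (insert x X) Y
    have hu : insert x X ∪ Y = insert x Y := by
      rw [Finset.insert_union, Finset.union_eq_right.mpr hXY]
    have hi : insert x X ∩ Y = X := by
      ext a
      simp only [Finset.mem_inter, Finset.mem_insert]
      constructor
      · rintro ⟨h1 | h1, h2⟩
        · exact absurd (h1 ▸ h2) hx
        · exact h1
      · intro ha; exact ⟨Or.inr ha, hXY ha⟩
    rw [hu, hi] at hsub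
    linarith
end

section
/- For a set function f : Finset Ω → ℝ on a type Ω with decidable equality, the following two conditions are equivalent: (2) for all finsets X, Y, f(X) + f(Y) ≥ f(X ∪ Y) + f(X ∩ Y); (3) for every finset X and all elements x₁ ≠ x₂ with x₁ ∉ X and x₂ ∉ X, f(X ∪ {x₁}) + f(X ∪ {x₂}) ≥ f(X ∪ {x₁, x₂}) + f(X). -/
/-- Equivalence of the lattice characterization and the pairwise-local
characterization of submodularity. -/
theorem submodular_iff_pairwise_local
    {Ω : Type*} [DecidableEq Ω] (f : Finset Ω → ℝ) :
    (∀ X Y : Finset Ω, f X + f Y ≥ f (X ∪ Y) + f (X ∩ Y)) ↔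
    (∀ (X : Finset Ω) (x₁ x₂ : Ω), x₁ ≠ x₂ → x₁ ∉ X → x₂ ∉ X →
        f (insert x₁ X) + f (insert x₂ X) ≥ f (insert x₁ (insert x₂ X)) + f X) := by
  constructor
  · intro h X x₁ x₂ hne h1 h2
    have hu : insert x₁ X ∪ insert x₂ X = insert x₁ (insert x₂ X) := by
      ext a; simp; tauto
    have hi : insert x₁ X ∩ insert x₂ X = X := by
      ext a
      simp only [Finset.mem_inter, Finset.mem_insert]
      constructor
      · rintro ⟨h1' | h1', h2' | h2'⟩ <;> first | assumption | (exfalso; subst_vars; tauto)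
      · intro ha; tauto
    have := h (insert x₁ X) (insert x₂ X)
    rw [hu, hi] at this
    exact this
  · intro h
    -- Key lemma: diminishing marginal returns
    have key : ∀ n (A B : Finset Ω) (x : Ω), A ⊆ B → x ∉ B → (B \ A).card = n →
        f (insert x B) + f A ≤ f (insert x A) + f B := by
      intro n
      induction n with
      | zero =>
        intro A B x hAB hx hc
        have hBA : B ⊆ A := by
          rwa [Finset.card_eq_zero, Finset.sdiff_eq_empty_iff_subset] at hc
        have : A = B := Finset.Subset.antisymm hAB hBA
        subst this
        linarith
      | succ n ih =>
        intro A B x hAB hxB hc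
        obtain ⟨y, hy⟩ : (B \ A).Nonempty := by
          rw [← Finset.card_pos, hc]; omega
        have hyB : y ∈ B := (Finset.mem_sdiff.mp hy).1
        have hyA : y ∉ A := (Finset.mem_sdiff.mp hy).2
        set B' := B.erase y with hB'
        have hAB' : A ⊆ B' := Finset.subset_erase.mpr ⟨hAB, hyA⟩
        have hxB' : x ∉ B' := fun hmem => hxB (Finset.erase_subset _ _ hmem)
        have hcard : (B' \ A).card = n := by
          have hEq : B' \ A = (B \ A).erase y := by
            ext a
            simp only [hB', Finset.mem_sdiff, Finset.mem_erase]
            tauto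
          rw [hEq, Finset.card_erase_of_mem hy, hc]; omega
        have h1 := ih A B' x hAB' hxB' hcard
        have hxy : x ≠ y := fun e => hxB (e ▸ hyB)
        have h2 := h B' x y hxy hxB' (Finset.notMem_erase y B)
        have hins : insert y B' = B := Finset.insert_erase hyB
        rw [hins] at h2
        linarith
    have key' : ∀ (A B : Finset Ω) (x : Ω), A ⊆ B → x ∉ B →
        f (insert x B) + f A ≤ f (insert x A) + f B :=
      fun A B x h1 h2 => key _ A B x h1 h2 rfl
    intro X Y
    -- induction on (Y \ X).card
    have main : ∀ n (Y : Finset Ω), (Y \ X).card = n →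
        f X + f Y ≥ f (X ∪ Y) + f (X ∩ Y) := by
      intro n
      induction n with
      | zero =>
        intro Y hc
        have hYX : Y ⊆ X := by
          rwa [Finset.card_eq_zero, Finset.sdiff_eq_empty_iff_subset] at hc
        rw [Finset.union_eq_left.mpr hYX, Finset.inter_eq_right.mpr hYX]
      | succ n ih =>
        intro Y hc
        obtain ⟨y, hy⟩ : (Y \ X).Nonempty := by
          rw [← Finset.card_pos, hc]; omega
        have hyY : y ∈ Y := (Finset.mem_sdiff.mp hy).1
        have hyX : y ∉ X := (Finset.mem_sdiff.mp hy).2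
        set Y' := Y.erase y with hY'
        have hc' : (Y' \ X).card = n := by
          have hEq : Y' \ X = (Y \ X).erase y := by
            ext a
            simp only [hY', Finset.mem_sdiff, Finset.mem_erase]
            tauto
          rw [hEq, Finset.card_erase_of_mem hy, hc]; omega
        have ih' := ih Y' hc'
        have hyY' : y ∉ Y' := Finset.notMem_erase y Y
        have hyXY' : y ∉ X ∪ Y' := by
          simp only [Finset.mem_union]; tauto
        have step := key' Y' (X ∪ Y') y Finset.subset_union_right hyXY'
        have hins : insert y Y' = Y := Finset.insert_erase hyY
        have hu : insert y (X ∪ Y') = X ∪ Y := by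
          rw [← hins, Finset.union_insert]
        have hinter : X ∩ Y' = X ∩ Y := by
          ext a
          simp only [hY', Finset.mem_inter, Finset.mem_erase]
          constructor
          · tauto
          · intro ha
            exact ⟨ha.1, by rintro rfl; exact hyX ha.1, ha.2⟩
        rw [hins, hu] at step
        rw [hinter] at ih'
        linarith
    exact main _ Y rfl
end

section
/- Let f : Finset Ω → ℝ (Ω a type with decidable equality) be monotone and submodular. Let S be any finset and S* a nonempty finset with |S*| = k. Then there exists x ∈ S* such that f(S ∪ {x}) − f(S) ≥ (f(S*) − f(S)) / k. -/
/-- For a monotone submodular function, some element of `S*` has marginal gain at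
least `(f(S*) - f(S)) / k`. -/
theorem exists_good_marginal_gain
    {Ω : Type*} [DecidableEq Ω]
    (f : Finset Ω → ℝ)
    (hmono : ∀ X Y : Finset Ω, X ⊆ Y → f X ≤ f Y)
    (hsub : ∀ X Y : Finset Ω, f X + f Y ≥ f (X ∪ Y) + f (X ∩ Y))
    (S Sstar : Finset Ω) (hne : Sstar.Nonempty)
    (k : ℕ) (hcard : Sstar.card = k) :
    ∃ x ∈ Sstar, f (insert x S) - f S ≥ (f Sstar - f S) / (k : ℝ) := by
  have key : ∀ T : Finset Ω, f (S ∪ T) - f S ≤ ∑ x ∈ T, (f (insert x S) - f S) := by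
    intro T
    induction T using Finset.induction_on with
    | empty => simp
    | @insert a T ha ih =>
      rw [Finset.sum_insert ha]
      have h1 := hsub (insert a S) (S ∪ T)
      have h2 : S ⊆ insert a S ∩ (S ∪ T) := by
        intro x hx; simp [hx]
      have h3 := hmono _ _ h2
      have h4 : insert a S ∪ (S ∪ T) = S ∪ insert a T := by
        ext x
        simp only [Finset.mem_union, Finset.mem_insert]
        tauto
      rw [h4] at h1
      linarith
  have hk : (0 : ℝ) < k := by
    have := Finset.card_pos.mpr hne
    rw [hcard] at this
    exact_mod_cast this
  have hbound : f Sstar - f S ≤ ∑ x ∈ Sstar, (f (insert x S) - f S) := by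
    have := hmono Sstar (S ∪ Sstar) Finset.subset_union_right
    have := key Sstar
    linarith
  have hsum : ∑ x ∈ Sstar, (f Sstar - f S) / (k : ℝ) ≤ ∑ x ∈ Sstar, (f (insert x S) - f S) := by
    rw [Finset.sum_const, hcard, nsmul_eq_mul]
    rw [mul_div_cancel₀ _ (ne_of_gt hk)]
    exact hbound
  obtain ⟨x, hx, hle⟩ := Finset.exists_le_of_sum_le hne hsum
  exact ⟨x, hx, hle⟩
end

section
/- Let f : Finset Ω → ℝ (Ω a type with decidable equality) be monotone and submodular. Let S be a finset, S* a nonempty finset with |S*| = k, and let x* be an element such that f(S ∪ {x*}) − f(S) ≥ f(S ∪ {y}) − f(S) for every y ∈ S* \ S. Then f(S*) − f(S ∪ {x*}) ≤ (1 − 1/k) · (f(S*) − f(S)). -/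
lemma greedy_aux {Ω : Type*} [DecidableEq Ω]
    (f : Finset Ω → ℝ)
    (hsub : ∀ X Y : Finset Ω, f X + f Y ≥ f (X ∪ Y) + f (X ∩ Y))
    (S : Finset Ω) :
    ∀ T : Finset Ω, f (S ∪ T) - f S ≤ ∑ y ∈ T \ S, (f (insert y S) - f S) := by
  intro T
  induction T using Finset.induction with
  | empty => simp
  | @insert a T ha ih =>
    by_cases haS : a ∈ S
    · have h1 : S ∪ insert a T = S ∪ T := by
        rw [Finset.union_insert, Finset.insert_eq_self]
        exact Finset.mem_union_left _ haS
      have h2 : insert a T \ S = T \ S := by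
        ext x; simp only [Finset.mem_sdiff, Finset.mem_insert]
        constructor
        · rintro ⟨h | h, hx⟩
          · exact absurd (h ▸ haS) hx
          · exact ⟨h, hx⟩
        · rintro ⟨h, hx⟩; exact ⟨Or.inr h, hx⟩
      rw [h1, h2]; exact ih
    · have h2 : insert a T \ S = insert a (T \ S) := by
        ext x; simp only [Finset.mem_sdiff, Finset.mem_insert]
        constructor
        · rintro ⟨h | h, hx⟩
          · exact Or.inl h
          · exact Or.inr ⟨h, hx⟩
        · rintro (h | ⟨h, hx⟩)
          · exact ⟨Or.inl h, h ▸ haS⟩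
          · exact ⟨Or.inr h, hx⟩
      have hanot : a ∉ T \ S := fun h => ha (Finset.mem_sdiff.mp h).1
      rw [h2, Finset.sum_insert hanot]
      have hsub' := hsub (S ∪ T) (insert a S)
      have hun : (S ∪ T) ∪ insert a S = S ∪ insert a T := by
        ext x; simp only [Finset.mem_union, Finset.mem_insert]; tauto
      have hin : (S ∪ T) ∩ insert a S = S := by
        ext x; simp only [Finset.mem_inter, Finset.mem_union, Finset.mem_insert]
        constructor
        · rintro ⟨hST, h | h⟩
          · rcases hST with h' | h'
            · exact h'
            · exact absurd (h ▸ h') ha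
          · exact h
        · intro h; exact ⟨Or.inl h, Or.inr h⟩
      rw [hun, hin] at hsub'
      linarith

/-- One greedy step shrinks the gap to the optimum by a factor `1 - 1/k`. -/
theorem greedy_step_gap_contraction
    {Ω : Type*} [DecidableEq Ω]
    (f : Finset Ω → ℝ)
    (hmono : ∀ X Y : Finset Ω, X ⊆ Y → f X ≤ f Y)
    (hsub : ∀ X Y : Finset Ω, f X + f Y ≥ f (X ∪ Y) + f (X ∩ Y))
    (S Sstar : Finset Ω) (hne : Sstar.Nonempty)
    (k : ℕ) (hcard : Sstar.card = k)
    (xstar : Ω)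
    (hbest : ∀ y ∈ Sstar \ S, f (insert y S) - f S ≤ f (insert xstar S) - f S) :
    f Sstar - f (insert xstar S) ≤ (1 - 1 / (k : ℝ)) * (f Sstar - f S) := by
  have hk : 0 < k := hcard ▸ Finset.card_pos.mpr hne
  have hkR : (0 : ℝ) < k := Nat.cast_pos.mpr hk
  set Δ : ℝ := f (insert xstar S) - f S with hΔ
  have hΔ0 : 0 ≤ Δ := by
    have := hmono S (insert xstar S) (Finset.subset_insert _ _)
    linarith
  have h1 : f Sstar ≤ f (S ∪ Sstar) := hmono _ _ Finset.subset_union_right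
  have h2 := greedy_aux f hsub S Sstar
  have h3 : ∑ y ∈ Sstar \ S, (f (insert y S) - f S) ≤ (Sstar \ S).card * Δ := by
    calc ∑ y ∈ Sstar \ S, (f (insert y S) - f S)
        ≤ ∑ _y ∈ Sstar \ S, Δ := Finset.sum_le_sum hbest
      _ = (Sstar \ S).card * Δ := by rw [Finset.sum_const, nsmul_eq_mul]
  have hcard' : ((Sstar \ S).card : ℝ) ≤ (k : ℝ) := by
    have : (Sstar \ S).card ≤ Sstar.card := Finset.card_le_card (Finset.sdiff_subset)
    exact_mod_cast hcard ▸ this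
  have h4 : ((Sstar \ S).card : ℝ) * Δ ≤ (k : ℝ) * Δ :=
    mul_le_mul_of_nonneg_right hcard' hΔ0
  have h5 : f Sstar - f S ≤ (k : ℝ) * Δ := by linarith
  have hgoal : f Sstar - f S - Δ ≤ (1 - 1 / (k : ℝ)) * (f Sstar - f S) := by
    rw [sub_mul, one_mul]
    have : (1 / (k : ℝ)) * (f Sstar - f S) ≤ Δ := by
      rw [div_mul_eq_mul_div, one_mul, div_le_iff₀ hkR]
      linarith [mul_comm Δ (k : ℝ)]
    linarith
  have : f Sstar - f (insert xstar S) = f Sstar - f S - Δ := by rw [hΔ]; ring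
  linarith
end
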